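/- arXiv:math/0404347 — 6 statements merged into one kernel-verified Lean document; each statement's English description precedes it below -/
import Mathlib

section
/- Let T be a k-tensor on ℝⁿ, H an n×n real matrix, p_1,q_1,…,p_{k-1},q_{k-1} ∈ {1,…,n}, and σ a permutation of {1,…,k} with σ^{-1}(k) = k. Then ⟨T, H_{p_1q_1} ∘_σ ⋯ ∘_σ H_{p_{k-1}q_{k-1}} ∘_σ H⟩ = (∏_{t=1}^{k-1} δ_{p_t q_{σ(t)}}) · Σ_{t=1}^{n} T^{p_1…p_{k-1}t} H^{tt}. -/
open Finset

/-- The Kronecker delta on `Fin n`, as a real number. -/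
def kdelta {n : ℕ} (a b : Fin n) : ℝ := if a = b then 1 else 0

/-- The basic matrix `H_{pq}`, whose `(i,j)` entry is `1` if `(i,j) = (p,q)` and `0` otherwise. -/
def basicM {n : ℕ} (p q : Fin n) : Matrix (Fin n) (Fin n) ℝ :=
  fun i j => if i = p ∧ j = q then 1 else 0

/-- The `σ`-Hadamard product of the matrices `H 1, ..., H k`:
`(H_1 ∘_σ ⋯ ∘_σ H_k)^{i_1…i_k} = ∏_s H_s^{i_s i_{σ⁻¹(s)}}`. -/
def hadP {n k : ℕ} (σ : Equiv.Perm (Fin k)) (H : Fin k → Matrix (Fin n) (Fin n) ℝ) :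
    (Fin k → Fin n) → ℝ :=
  fun i => ∏ s, H s (i s) (i (σ⁻¹ s))

/-- The inner product of two k-tensors: `⟨T₁, T₂⟩ = Σ_{i_1,…,i_k} T₁^{i_1…i_k} T₂^{i_1…i_k}`. -/
def tinner {n k : ℕ} (T₁ T₂ : (Fin k → Fin n) → ℝ) : ℝ :=
  ∑ i : Fin k → Fin n, T₁ i * T₂ i

/-- Lemma 2.4(1): if `σ⁻¹(k) = k` then
`⟨T, H_{p_1q_1} ∘_σ ⋯ ∘_σ H_{p_{k-1}q_{k-1}} ∘_σ H⟩
  = (∏_{t=1}^{k-1} δ_{p_t q_{σ(t)}}) Σ_t T^{p_1…p_{k-1} t} H^{tt}`. -/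
theorem inner_with_sigma_hadamard_fix {n k : ℕ} (σ : Equiv.Perm (Fin (k + 1)))
    (hσ : σ⁻¹ (Fin.last k) = Fin.last k)
    (T : (Fin (k + 1) → Fin n) → ℝ) (p q : Fin k → Fin n)
    (H : Matrix (Fin n) (Fin n) ℝ) :
    tinner T (hadP σ (Fin.lastCases H (fun t => basicM (p t) (q t)))) =
      (∏ t : Fin k, if h : σ t.castSucc = Fin.last k then 1
        else kdelta (p t) (q ((σ t.castSucc).castPred h))) *
      ∑ t : Fin n, T (Fin.snoc p t) * H t t := by
  classical
  have hlast : σ (Fin.last k) = Fin.last k := by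
    conv_lhs => rw [← hσ]
    exact σ.apply_symm_apply _
  have hne : ∀ t : Fin k, σ t.castSucc ≠ Fin.last k := by
    intro t h
    exact (Fin.castSucc_lt_last t).ne (σ.injective (h.trans hlast.symm))
  have hne' : ∀ t : Fin k, σ⁻¹ t.castSucc ≠ Fin.last k := by
    intro t h
    exact (Fin.castSucc_lt_last t).ne ((σ⁻¹).injective (h.trans hσ.symm))
  let π : Equiv.Perm (Fin k) :=
    { toFun := fun t => (σ t.castSucc).castPred (hne t)
      invFun := fun t => (σ⁻¹ t.castSucc).castPred (hne' t)
      left_inv := fun t => by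
        apply Fin.ext
        simp [Fin.coe_castPred, Fin.castSucc_castPred]
      right_inv := fun t => by
        apply Fin.ext
        simp [Fin.coe_castPred, Fin.castSucc_castPred] }
  have hπinv_cast : ∀ t : Fin k, σ⁻¹ t.castSucc = (π⁻¹ t).castSucc := fun t => by
    show σ⁻¹ t.castSucc = ((σ⁻¹ t.castSucc).castPred (hne' t)).castSucc
    rw [Fin.castSucc_castPred]
  set C : ℝ := ∏ t : Fin k, if p t = q (π t) then (1:ℝ) else 0 with hC
  have hRHS : (∏ t : Fin k, if h : σ t.castSucc = Fin.last k then (1:ℝ)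
      else kdelta (p t) (q ((σ t.castSucc).castPred h))) = C := by
    refine Finset.prod_congr rfl fun t _ => ?_
    rw [dif_neg (hne t)]
    rfl
  have hprod_eq : ∀ f : Fin k → Fin n,
      (∏ t, if f t = p t then (1:ℝ) else 0) = if f = p then 1 else 0 := by
    intro f
    by_cases h : f = p
    · simp [h]
    · obtain ⟨t, ht⟩ := Function.ne_iff.mp h
      rw [if_neg h]
      exact Finset.prod_eq_zero (Finset.mem_univ t) (if_neg ht)
  have hhad : ∀ (f : Fin k → Fin n) (x : Fin n),
      hadP σ (Fin.lastCases H fun t => basicM (p t) (q t)) (Fin.snoc f x) =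
      ((if f = p then (1:ℝ) else 0) * C) * H x x := by
    intro f x
    set i : Fin (k+1) → Fin n := Fin.snoc f x with hi
    rw [hadP, Fin.prod_univ_castSucc]
    have h1 : ∀ t : Fin k,
        Fin.lastCases H (fun t => basicM (p t) (q t))
          t.castSucc
          (i t.castSucc) (i (σ⁻¹ t.castSucc)) =
        (if f t = p t then (1:ℝ) else 0) * (if f (π⁻¹ t) = q t then 1 else 0) := by
      intro t
      rw [hπinv_cast t]
      erw [Fin.lastCases_castSucc]
      simp only [hi, Fin.lastCases_castSucc, Fin.snoc_castSucc, basicM]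
      split_ifs <;> simp_all
    have h2 : Fin.lastCases H (fun t => basicM (p t) (q t))
        (Fin.last k) (i (Fin.last k)) (i (σ⁻¹ (Fin.last k))) = H x x := by
      rw [hσ]
      simp [hi]
      erw [Fin.lastCases_last]
    erw [h2]
    congr 1
    calc (∏ t : Fin k,
          Fin.lastCases H (fun t => basicM (p t) (q t))
            t.castSucc (i t.castSucc) (i (σ⁻¹ t.castSucc)))
        = ∏ t : Fin k, (if f t = p t then (1:ℝ) else 0) * (if f (π⁻¹ t) = q t then 1 else 0) :=
          Finset.prod_congr rfl fun t _ => h1 t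
      _ = (∏ t, if f t = p t then (1:ℝ) else 0) * ∏ t, (if f (π⁻¹ t) = q t then (1:ℝ) else 0) :=
          Finset.prod_mul_distrib
      _ = (∏ t, if f t = p t then (1:ℝ) else 0) * ∏ t, (if f t = q (π t) then (1:ℝ) else 0) := by
          congr 1
          rw [← Equiv.prod_comp π (fun t => if f (π⁻¹ t) = q t then (1:ℝ) else 0)]
          refine Finset.prod_congr rfl fun t _ => ?_
          simp
      _ = ∏ t, ((if f t = p t then (1:ℝ) else 0) * (if f t = q (π t) then (1:ℝ) else 0)) :=
          Finset.prod_mul_distrib.symm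
      _ = ∏ t, ((if f t = p t then (1:ℝ) else 0) * (if p t = q (π t) then (1:ℝ) else 0)) := by
          refine Finset.prod_congr rfl fun t _ => ?_
          by_cases h : f t = p t <;> simp [h]
      _ = (if f = p then (1:ℝ) else 0) * C := by
          rw [Finset.prod_mul_distrib, hprod_eq]
  let e : (Fin k → Fin n) × Fin n ≃ (Fin (k+1) → Fin n) :=
    { toFun := fun fx => Fin.snoc fx.1 fx.2
      invFun := fun g => (fun t => g t.castSucc, g (Fin.last k))
      left_inv := fun fx => by simp
      right_inv := fun g => by
        funext s
        refine Fin.lastCases ?_ ?_ s <;> simp }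
  rw [hRHS]
  calc tinner T (hadP σ (Fin.lastCases H fun t => basicM (p t) (q t)))
      = ∑ fx : (Fin k → Fin n) × Fin n,
          T (Fin.snoc fx.1 fx.2) *
            hadP σ (Fin.lastCases H fun t => basicM (p t) (q t)) (Fin.snoc fx.1 fx.2) :=
        (Equiv.sum_comp e (fun i => T i * hadP σ (Fin.lastCases H fun t => basicM (p t) (q t)) i)).symm
    _ = ∑ f : Fin k → Fin n, ∑ x : Fin n,
          T (Fin.snoc f x) * (((if f = p then (1:ℝ) else 0) * C) * H x x) := by
        rw [Fintype.sum_prod_type]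
        exact Finset.sum_congr rfl fun f _ => Finset.sum_congr rfl fun x _ => by rw [hhad]
    _ = ∑ f : Fin k → Fin n, (if f = p then
          (C * ∑ x : Fin n, T (Fin.snoc f x) * H x x) else 0) := by
        refine Finset.sum_congr rfl fun f _ => ?_
        by_cases h : f = p
        · simp only [h, if_pos, if_true]
          rw [Finset.mul_sum]
          exact Finset.sum_congr rfl fun x _ => by ring
        · simp [h]
    _ = C * ∑ x : Fin n, T (Fin.snoc p x) * H x x := by
        rw [Finset.sum_ite_eq' Finset.univ p]
        simp
end

section
/- Let T be a k-tensor on ℝⁿ, H an n×n real matrix, p_1,q_1,…,p_{k-1},q_{k-1} ∈ {1,…,n}, and σ a permutation of {1,…,k} with σ^{-1}(k) = l where l ≠ k. Then ⟨T, H_{p_1q_1} ∘_σ ⋯ ∘_σ H_{p_{k-1}q_{k-1}} ∘_σ H⟩ = (∏_{t=1, t≠l}^{k-1} δ_{p_t q_{σ(t)}}) · T^{p_1…p_{k-1} q_{σ(k)}} · H^{q_{σ(k)} p_l}. -/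
open Finset

/-- Lemma 2.4(2): if `σ⁻¹(k) = l ≠ k` (here `l` and `m` are elements of `{1,…,k-1}`
with `l = σ⁻¹(k)` and `m = σ(k)`), then
`⟨T, H_{p_1q_1} ∘_σ ⋯ ∘_σ H_{p_{k-1}q_{k-1}} ∘_σ H⟩
  = (∏_{t≠l} δ_{p_t q_{σ(t)}}) · T^{p_1…p_{k-1} q_{σ(k)}} · H^{q_{σ(k)} p_l}`. -/
theorem inner_with_sigma_hadamard_nonfix {n k : ℕ} (σ : Equiv.Perm (Fin (k + 1)))
    (l m : Fin k) (hl : Fin.castSucc l = σ⁻¹ (Fin.last k))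
    (hm : Fin.castSucc m = σ (Fin.last k))
    (T : (Fin (k + 1) → Fin n) → ℝ) (p q : Fin k → Fin n)
    (H : Matrix (Fin n) (Fin n) ℝ) :
    tinner T (hadP σ (Fin.lastCases H (fun t => basicM (p t) (q t)))) =
      (∏ t ∈ Finset.univ.erase l, if h : σ t.castSucc = Fin.last k then 1
        else kdelta (p t) (q ((σ t.castSucc).castPred h))) *
      T (Fin.snoc p (q m)) * H (q m) (p l) := by
  classical
  have hσl : σ (Fin.castSucc l) = Fin.last k := by rw [hl]; simp
  have hσm : σ⁻¹ (Fin.castSucc m) = Fin.last k := by rw [hm]; simp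
  have hne1 : ∀ t : Fin k, t ≠ l → σ t.castSucc ≠ Fin.last k := by
    intro t ht hc
    exact ht (Fin.castSucc_injective _ (by rw [hl, ← hc]; simp))
  have hne2 : ∀ u : Fin k, u ≠ m → σ⁻¹ u.castSucc ≠ Fin.last k := by
    intro u hu hc
    exact hu (Fin.castSucc_injective _ (by rw [hm, ← hc]; simp))
  set i₀ : Fin (k+1) → Fin n := Fin.snoc p (q m) with hi₀
  have hval : hadP σ (Fin.lastCases H (fun t => basicM (p t) (q t))) i₀ =
      (∏ t ∈ Finset.univ.erase l, if h : σ t.castSucc = Fin.last k then 1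
        else kdelta (p t) (q ((σ t.castSucc).castPred h))) * H (q m) (p l) := by
    unfold hadP
    rw [Fin.prod_univ_castSucc]
    have hlast : (Fin.lastCases H (fun t => basicM (p t) (q t)) :
        Fin (k+1) → Matrix (Fin n) (Fin n) ℝ) (Fin.last k) (i₀ (Fin.last k))
        (i₀ (σ⁻¹ (Fin.last k))) = H (q m) (p l) := by
      rw [← hl]; simp [hi₀]
    rw [hlast]
    congr 1
    have hfac : ∀ u : Fin k,
        (Fin.lastCases H (fun t => basicM (p t) (q t)) :
          Fin (k+1) → Matrix (Fin n) (Fin n) ℝ) u.castSucc (i₀ u.castSucc)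
          (i₀ (σ⁻¹ u.castSucc)) = if i₀ (σ⁻¹ u.castSucc) = q u then 1 else 0 := by
      intro u; simp [hi₀, basicM]
    simp only [hfac]
    rw [← Finset.prod_erase_mul (univ : Finset (Fin k))
        (fun u => if i₀ (σ⁻¹ u.castSucc) = q u then 1 else 0) (Finset.mem_univ m)]
    have hgm : (if i₀ (σ⁻¹ (Fin.castSucc m)) = q m then (1:ℝ) else 0) = 1 := by
      rw [hσm]; simp [hi₀]
    rw [hgm, mul_one]
    refine (Finset.prod_bij'
      (i := fun t (ht : t ∈ univ.erase l) =>
        (σ t.castSucc).castPred (hne1 t (Finset.mem_erase.mp ht).1))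
      (j := fun u (hu : u ∈ univ.erase m) =>
        (σ⁻¹ u.castSucc).castPred (hne2 u (Finset.mem_erase.mp hu).1))
      ?_ ?_ ?_ ?_ ?_).symm
    · intro t ht
      simp only [Finset.mem_erase, Finset.mem_univ, and_true]
      intro hc
      have : σ t.castSucc = Fin.castSucc m := by
        rw [← hc, Fin.castSucc_castPred]
      have h2 : t.castSucc = Fin.last k := by
        rw [← hσm, ← this, ← Equiv.Perm.mul_apply, inv_mul_cancel, Equiv.Perm.one_apply]
      exact absurd h2 (Fin.castSucc_lt_last t).ne
    · intro u hu
      simp only [Finset.mem_erase, Finset.mem_univ, and_true]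
      intro hc
      have : σ⁻¹ u.castSucc = Fin.castSucc l := by
        rw [← hc, Fin.castSucc_castPred]
      have h2 : u.castSucc = Fin.last k := by
        rw [← hσl, ← this, ← Equiv.Perm.mul_apply, mul_inv_cancel, Equiv.Perm.one_apply]
      exact absurd h2 (Fin.castSucc_lt_last u).ne
    · intro t ht
      apply Fin.castSucc_injective
      simp [Fin.castSucc_castPred]
    · intro u hu
      apply Fin.castSucc_injective
      simp [Fin.castSucc_castPred]
    · intro t ht
      rw [dif_neg (hne1 t (Finset.mem_erase.mp ht).1)]
      have : i₀ (σ⁻¹ ((σ t.castSucc).castPred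
          (hne1 t (Finset.mem_erase.mp ht).1)).castSucc) = p t := by
        rw [Fin.castSucc_castPred]
        simp [hi₀]
      rw [this]
      simp [kdelta, eq_comm]
  rw [tinner, Finset.sum_eq_single i₀]
  · rw [hval]; ring
  · intro i _ hne
    have hz : hadP σ (Fin.lastCases H (fun t => basicM (p t) (q t))) i = 0 := by
      have : ∃ u, i u ≠ i₀ u := by
        by_contra hc
        push_neg at hc
        exact hne (funext hc)
      obtain ⟨u, hu⟩ := this
      unfold hadP
      induction u using Fin.lastCases with
      | last =>
        apply Finset.prod_eq_zero (Finset.mem_univ (Fin.castSucc m))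
        have : i (σ⁻¹ (Fin.castSucc m)) = i (Fin.last k) := by rw [hσm]
        simp only [Fin.lastCases_castSucc, basicM, this]
        rw [if_neg]
        intro hc
        exact hu (by rw [hc.2]; simp [hi₀])
      | cast t =>
        apply Finset.prod_eq_zero (Finset.mem_univ (Fin.castSucc t))
        simp only [Fin.lastCases_castSucc, basicM]
        rw [if_neg]
        intro hc
        exact hu (by rw [hc.1]; simp [hi₀])
    rw [hz, mul_zero]
  · intro h; exact absurd (Finset.mem_univ _) h
end

section
/- Let σ_1, σ_2, and μ be permutations of {1,…,k}, and assume n ≥ k. Then the identity ⟨P_μ(T), H_1 ∘_{σ_1} ⋯ ∘_{σ_1} H_k⟩ = ⟨P_μ(T), H_1 ∘_{σ_2} ⋯ ∘_{σ_2} H_k⟩ holds for all n×n real matrices H_1,…,H_k and all k-tensors T on ℝⁿ if, and only if, μ ⪯ σ_2^{-1} ∘ σ_1. -/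
open Finset

/-- `P_μ(T)` keeps the entries of `T` on the diagonal "subspace" of `μ` and zeroes the rest. -/
def Pmu {n k : ℕ} (μ : Equiv.Perm (Fin k)) (T : (Fin k → Fin n) → ℝ) :
    (Fin k → Fin n) → ℝ :=
  fun i => if ∀ s, i s = i (μ s) then T i else 0

/-- `μ ⪯ σ`, i.e. `σ` refines `μ`: every orbit `{σ^l(s) : l = 1,2,…}` of `σ` is contained
in an orbit `{μ^l(r) : l = 1,2,…}` of `μ`. -/
def Refines {k : ℕ} (μ σ : Equiv.Perm (Fin k)) : Prop :=
  ∀ s : Fin k, ∃ r : Fin k,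
    {x | ∃ l : ℕ, 1 ≤ l ∧ x = (σ ^ l) s} ⊆ {x | ∃ l : ℕ, 1 ≤ l ∧ x = (μ ^ l) r}

/-- A `μ`-invariant coloring is constant along natural powers of `μ`. -/
lemma inv_pow_const {n k : ℕ} {μ : Equiv.Perm (Fin k)} {i : Fin k → Fin n}
    (hi : ∀ s, i s = i (μ s)) : ∀ (m : ℕ) (t : Fin k), i ((μ ^ m) t) = i t := by
  intro m
  induction m with
  | zero => intro t; simp
  | succ m ih =>
    intro t
    have h1 : (μ ^ (m + 1)) t = μ ((μ ^ m) t) := by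
      rw [pow_succ']; rfl
    rw [h1, ← hi ((μ ^ m) t), ih]

/-- A `μ`-invariant coloring is constant on `μ`-cycles. -/
lemma inv_sameCycle_const {n k : ℕ} {μ : Equiv.Perm (Fin k)} {i : Fin k → Fin n}
    (hi : ∀ s, i s = i (μ s)) {a b : Fin k} (h : μ.SameCycle a b) : i a = i b := by
  obtain ⟨m, -, -, hm⟩ := h.exists_pow_eq''
  rw [← hm, inv_pow_const hi]

/-- Inner product with the `P_μ` of an indicator tensor. -/
lemma tinner_indicator {n k : ℕ} (μ : Equiv.Perm (Fin k)) (i : Fin k → Fin n)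
    (hi : ∀ s, i s = i (μ s)) (G : (Fin k → Fin n) → ℝ) :
    tinner (Pmu μ (fun j => if j = i then (1 : ℝ) else 0)) G = G i := by
  classical
  unfold tinner Pmu
  rw [Finset.sum_eq_single i]
  · rw [if_pos hi]; simp
  · intro b _ hb; simp [hb]
  · simp

/-- Theorem 3.1: for `n ≥ k`, the identity
`⟨P_μ(T), H_1 ∘_{σ₁} ⋯ ∘_{σ₁} H_k⟩ = ⟨P_μ(T), H_1 ∘_{σ₂} ⋯ ∘_{σ₂} H_k⟩`
holds for all matrices `H_1,…,H_k` and all k-tensors `T` iff `μ ⪯ σ₂⁻¹ ∘ σ₁`. -/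
theorem transfer_diagonal_subspaces {n k : ℕ} (hkn : k ≤ n)
    (σ₁ σ₂ μ : Equiv.Perm (Fin k)) :
    (∀ (T : (Fin k → Fin n) → ℝ) (H : Fin k → Matrix (Fin n) (Fin n) ℝ),
        tinner (Pmu μ T) (hadP σ₁ H) = tinner (Pmu μ T) (hadP σ₂ H)) ↔
      Refines μ (σ₂⁻¹ * σ₁) := by
  classical
  constructor
  · intro h
    -- Step 1: for every μ-invariant i, the index functions agree up to μ-cycles
    have key : ∀ i : Fin k → Fin n, (∀ s, i s = i (μ s)) →
        ∀ s, i (σ₁⁻¹ s) = i (σ₂⁻¹ s) := by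
      intro i hi s₀
      by_contra hne
      have hH : ∀ H : Fin k → Matrix (Fin n) (Fin n) ℝ,
          hadP σ₁ H i = hadP σ₂ H i := by
        intro H
        have := h (fun j => if j = i then 1 else 0) H
        rwa [tinner_indicator μ i hi, tinner_indicator μ i hi] at this
      set H : Fin k → Matrix (Fin n) (Fin n) ℝ :=
        fun t => Matrix.of fun a b =>
          if t = s₀ ∧ a = i t ∧ b = i (σ₂⁻¹ s₀) then (0 : ℝ) else 1 with hHdef
      have h2 : hadP σ₂ H i = 0 := by
        unfold hadP
        apply Finset.prod_eq_zero (Finset.mem_univ s₀)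
        simp [hHdef]
      have h1 : hadP σ₁ H i = 1 := by
        unfold hadP
        apply Finset.prod_eq_one
        intro t _
        by_cases ht : t = s₀
        · subst ht
          simp [hHdef, hne]
          simpa using hne
        · simp [hHdef, ht]
      have := hH H
      rw [h1, h2] at this
      exact one_ne_zero this
    -- Step 2: use a canonical coloring of μ-cycles to get SameCycle facts
    have step2 : ∀ s, μ.SameCycle (σ₁⁻¹ s) (σ₂⁻¹ s) := by
      intro s
      have hne : ∀ t : Fin k, (Finset.univ.filter (μ.SameCycle t)).Nonempty :=
        fun t => ⟨t, by simp [Equiv.Perm.SameCycle.refl]⟩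
      set rep : Fin k → Fin k := fun t => (Finset.univ.filter (μ.SameCycle t)).min' (hne t)
        with hrep
      have hfilt : ∀ t : Fin k,
          Finset.univ.filter (μ.SameCycle (μ t)) = Finset.univ.filter (μ.SameCycle t) := by
        intro t
        apply Finset.filter_congr
        intro x _
        exact Equiv.Perm.sameCycle_apply_left
      set i : Fin k → Fin n := fun t => Fin.castLE hkn (rep t) with hidef
      have hi : ∀ t, i t = i (μ t) := by
        intro t
        simp only [hidef, hrep, hfilt t]
      have := key i hi s
      have hrepeq : rep (σ₁⁻¹ s) = rep (σ₂⁻¹ s) := Fin.castLE_injective hkn this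
      have hm1 : μ.SameCycle (σ₁⁻¹ s) (rep (σ₁⁻¹ s)) := by
        have := Finset.min'_mem _ (hne (σ₁⁻¹ s))
        simpa using (Finset.mem_filter.mp this).2
      have hm2 : μ.SameCycle (σ₂⁻¹ s) (rep (σ₂⁻¹ s)) := by
        have := Finset.min'_mem _ (hne (σ₂⁻¹ s))
        simpa using (Finset.mem_filter.mp this).2
      rw [hrepeq] at hm1
      exact hm1.trans hm2.symm
    -- Step 3: SameCycle of t and τ t
    have step3 : ∀ t, μ.SameCycle t ((σ₂⁻¹ * σ₁) t) := by
      intro t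
      have := step2 (σ₁ t)
      simpa using this
    -- Step 4: whole τ-orbits lie in μ-cycles, hence Refines
    have step4 : ∀ (l : ℕ) (t : Fin k), μ.SameCycle t (((σ₂⁻¹ * σ₁) ^ l) t) := by
      intro l
      induction l with
      | zero => intro t; simp [Equiv.Perm.SameCycle.refl]
      | succ l ih =>
        intro t
        have h1 : ((σ₂⁻¹ * σ₁) ^ (l + 1)) t = (σ₂⁻¹ * σ₁) (((σ₂⁻¹ * σ₁) ^ l) t) := by
          rw [pow_succ']; rfl
        rw [h1]
        exact (ih t).trans (step3 _)
    intro s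
    refine ⟨s, ?_⟩
    rintro x ⟨l, -, rfl⟩
    obtain ⟨m, hm0, -, hm⟩ := (step4 l s).exists_pow_eq''
    exact ⟨m, hm0, hm.symm⟩
  · intro href T H
    -- From Refines, SameCycle of t and τ t
    have step3 : ∀ t, μ.SameCycle t ((σ₂⁻¹ * σ₁) t) := by
      intro t
      obtain ⟨r, hr⟩ := href t
      have h1 : (σ₂⁻¹ * σ₁) t ∈ {x | ∃ l : ℕ, 1 ≤ l ∧ x = ((σ₂⁻¹ * σ₁) ^ l) t} :=
        ⟨1, le_rfl, by simp⟩
      have h2 : t ∈ {x | ∃ l : ℕ, 1 ≤ l ∧ x = ((σ₂⁻¹ * σ₁) ^ l) t} :=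
        ⟨orderOf (σ₂⁻¹ * σ₁), orderOf_pos _, by rw [pow_orderOf_eq_one]; rfl⟩
      obtain ⟨l₁, -, hl₁⟩ := hr h1
      obtain ⟨l₂, -, hl₂⟩ := hr h2
      have c1 : μ.SameCycle r ((σ₂⁻¹ * σ₁) t) := ⟨(l₁ : ℤ), by rw [zpow_natCast, ← hl₁]⟩
      have c2 : μ.SameCycle r t := ⟨(l₂ : ℤ), by rw [zpow_natCast, ← hl₂]⟩
      exact c2.symm.trans c1
    have key : ∀ i : Fin k → Fin n, (∀ s, i s = i (μ s)) →
        ∀ s, i (σ₁⁻¹ s) = i (σ₂⁻¹ s) := by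
      intro i hi s
      have := inv_sameCycle_const hi (step3 (σ₁⁻¹ s))
      simpa using this
    unfold tinner
    apply Finset.sum_congr rfl
    intro j _
    unfold Pmu
    by_cases hj : ∀ s, j s = j (μ s)
    · rw [if_pos hj]
      congr 1
      unfold hadP
      apply Finset.prod_congr rfl
      intro t _
      rw [key j hj t]
    · rw [if_neg hj, zero_mul, zero_mul]
end

section
/- Let μ and ν be permutations of {1,…,k} with μ ⪯ ν. Then for every permutation σ of {1,…,k}, all n×n real matrices H_1,…,H_k, and every k-tensor T on ℝⁿ: ⟨P_μ(T), H_1 ∘_σ ⋯ ∘_σ H_k⟩ = ⟨P_μ(T), H_1 ∘_{σ∘ν} ⋯ ∘_{σ∘ν} H_k⟩. -/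
open Finset

/-!
An index `i` in the support of `P_μ(T)` is constant on the orbits of `μ`. Since every orbit of `ν`
lies in an orbit of `μ`, such an `i` is also `ν`-invariant, so `i ∘ (σν)⁻¹ = i ∘ σ⁻¹` and the two
Hadamard products agree at `i`.
-/

namespace Equiv.Perm

theorem SameCycle.apply_eq_of_forall_apply_eq {α β : Type*} [Finite α] {μ : Perm α}
    {f : α → β} (hf : ∀ a, f (μ a) = f a) {x y : α} (h : SameCycle μ x y) : f x = f y := by
  obtain ⟨l, rfl⟩ := h.exists_nat_pow_eq
  clear h
  induction l with
  | zero => rfl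
  | succ l ih => rw [ih, pow_succ', mul_apply, hf]

end Equiv.Perm

open Equiv.Perm

theorem Refines.sameCycle {k : ℕ} {μ ν : Equiv.Perm (Fin k)} (h : Refines μ ν) {x y : Fin k}
    (hxy : ν.SameCycle x y) : μ.SameCycle x y := by
  obtain ⟨r, hr⟩ := h x
  have mem_orbit_of_sameCycle {z : Fin k} (hz : ν.SameCycle x z) : μ.SameCycle r z := by
    obtain ⟨l, hl, -, rfl⟩ := hz.exists_pow_eq''
    obtain ⟨m, -, hm⟩ := hr ⟨l, hl, rfl⟩
    exact ⟨m, by rw [hm, zpow_natCast]⟩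
  exact (mem_orbit_of_sameCycle (SameCycle.refl ν x)).symm.trans (mem_orbit_of_sameCycle hxy)

theorem hadP_mul_apply_of_forall_apply_inv_eq {n k : ℕ} (σ ν : Equiv.Perm (Fin k))
    (H : Fin k → Matrix (Fin n) (Fin n) ℝ) {i : Fin k → Fin n} (hi : ∀ t, i (ν⁻¹ t) = i t) :
    hadP (σ * ν) H i = hadP σ H i := by
  refine prod_congr rfl fun s _ => ?_
  rw [mul_inv_rev, mul_apply, hi]

/-- Corollary 3.2: if `μ ⪯ ν`, then for any permutation `σ`, matrices `H_1,…,H_k`,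
and tensor `T`:
`⟨P_μ(T), H_1 ∘_σ ⋯ ∘_σ H_k⟩ = ⟨P_μ(T), H_1 ∘_{σ∘ν} ⋯ ∘_{σ∘ν} H_k⟩`. -/
theorem transfer_diagonal_refine {n k : ℕ} (μ ν : Equiv.Perm (Fin k))
    (hμν : Refines μ ν) (σ : Equiv.Perm (Fin k))
    (H : Fin k → Matrix (Fin n) (Fin n) ℝ) (T : (Fin k → Fin n) → ℝ) :
    tinner (Pmu μ T) (hadP σ H) = tinner (Pmu μ T) (hadP (σ * ν) H) := by
  refine sum_congr rfl fun i _ => ?_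
  by_cases hdiag : ∀ s, i s = i (μ s)
  · have hν : ∀ t, i (ν⁻¹ t) = i t := fun t =>
      SameCycle.apply_eq_of_forall_apply_eq (fun s => (hdiag s).symm)
        (hμν.sameCycle ⟨1, by simp⟩)
    rw [hadP_mul_apply_of_forall_apply_inv_eq σ ν H hν]
  · simp only [Pmu, if_neg hdiag, zero_mul]
end

section
/- Let T be a k-tensor on ℝⁿ, let H_1,…,H_k be n×n real matrices, let U be an n×n orthogonal matrix, and let σ be a permutation of {1,…,k}. With H̃_i = U^T H_i U for i = 1,…,k, the identity ⟨T, H̃_1 ∘_σ ⋯ ∘_σ H̃_k⟩ = (U(Diag^σ T)U^T)[H_1,…,H_k] holds. -/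
open Finset Matrix

/-- `Diag^σ T`: the 2k-tensor `(Diag^σ T)^{i_1…i_k,j_1…j_k} = T^{i_1…i_k} ∏_s δ_{i_s j_{σ(s)}}`. -/
def DiagT {n k : ℕ} (σ : Equiv.Perm (Fin k)) (T : (Fin k → Fin n) → ℝ) :
    (Fin k → Fin n) → (Fin k → Fin n) → ℝ :=
  fun i j => T i * ∏ s, kdelta (i s) (j (σ s))

/-- The conjugation action `U S Uᵀ` of an `n×n` matrix `U` on a 2k-tensor `S`:
`(USUᵀ)^{i_1…i_k,j_1…j_k} = Σ_{p,q} S^{p_1…p_k,q_1…q_k} ∏_ν U^{i_ν p_ν} U^{j_ν q_ν}`. -/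
def conjT2 {n k : ℕ} (U : Matrix (Fin n) (Fin n) ℝ)
    (S : (Fin k → Fin n) → (Fin k → Fin n) → ℝ) :
    (Fin k → Fin n) → (Fin k → Fin n) → ℝ :=
  fun i j => ∑ p : Fin k → Fin n, ∑ q : Fin k → Fin n,
    S p q * ∏ ν, U (i ν) (p ν) * U (j ν) (q ν)

/-- The action of a 2k-tensor `S` on k matrices:
`S[H_1,…,H_k] = Σ_{p,q} S^{p_1…p_k,q_1…q_k} H_1^{p_1 q_1} ⋯ H_k^{p_k q_k}`. -/
def applyT2 {n k : ℕ} (S : (Fin k → Fin n) → (Fin k → Fin n) → ℝ)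
    (H : Fin k → Matrix (Fin n) (Fin n) ℝ) : ℝ :=
  ∑ p : Fin k → Fin n, ∑ q : Fin k → Fin n, S p q * ∏ s, H s (p s) (q s)

/-!
The conjugation action is adjoint to `H ↦ Uᵀ H U`: expanding the entries of `Uᵀ H_s U` and
exchanging the order of summation gives `(U S Uᵀ)[H_1,…,H_k] = S[Uᵀ H_1 U,…,Uᵀ H_k U]` for every
2k-tensor `S` and every matrix `U`. For `S = Diag^σ T` the Kronecker deltas collapse the sum over
the second multi-index to `j = i ∘ σ⁻¹`, which leaves `⟨T, H̃_1 ∘_σ ⋯ ∘_σ H̃_k⟩`.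
-/

lemma prod_kdelta_comp_perm {n k : ℕ} (σ : Equiv.Perm (Fin k)) (p q : Fin k → Fin n) :
    ∏ s, kdelta (p s) (q (σ s)) = if q = p ∘ σ.symm then 1 else 0 := by
  have hcond : (∀ s, p s = q (σ s)) ↔ q = p ∘ σ.symm := by
    constructor
    · intro h
      funext t
      simp [h]
    · rintro rfl s
      simp
  simp only [kdelta, Finset.prod_boole, Finset.mem_univ, true_implies, hcond]

lemma applyT2_DiagT {n k : ℕ} (σ : Equiv.Perm (Fin k)) (T : (Fin k → Fin n) → ℝ)
    (H : Fin k → Matrix (Fin n) (Fin n) ℝ) :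
    applyT2 (DiagT σ T) H = tinner T (hadP σ H) := by
  refine Finset.sum_congr rfl fun p _ => ?_
  simp [DiagT, prod_kdelta_comp_perm, hadP]

lemma sum_sum_prod_eq_prod_sum_sum {ι α β R : Type*} [Fintype ι] [DecidableEq ι]
    [Fintype α] [Fintype β] [CommSemiring R] (f : ι → α → β → R) :
    ∑ a : ι → α, ∑ b : ι → β, ∏ i, f i (a i) (b i) = ∏ i, ∑ x, ∑ y, f i x y := by
  simp only [Fintype.prod_sum]

lemma transpose_mul_mul_apply {n R : Type*} [Fintype n] [CommSemiring R]
    (U H : Matrix n n R) (x y : n) :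
    (Uᵀ * H * U) x y = ∑ p, ∑ q, U p x * H p q * U q y := by
  simp only [mul_apply, transpose_apply, Finset.sum_mul]
  exact Finset.sum_comm

lemma applyT2_conjT2 {n k : ℕ} (U : Matrix (Fin n) (Fin n) ℝ)
    (S : (Fin k → Fin n) → (Fin k → Fin n) → ℝ) (H : Fin k → Matrix (Fin n) (Fin n) ℝ) :
    applyT2 (conjT2 U S) H = applyT2 S (fun s => Uᵀ * H s * U) := by
  simp only [applyT2, conjT2, transpose_mul_mul_apply, ← sum_sum_prod_eq_prod_sum_sum,
    Finset.mul_sum, Finset.sum_mul]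
  rw [Finset.sum_comm_cycle]
  refine Finset.sum_congr rfl fun p _ => ?_
  rw [Finset.sum_comm_cycle]
  refine Finset.sum_congr rfl fun q _ => Finset.sum_congr rfl fun i _ =>
    Finset.sum_congr rfl fun j _ => ?_
  rw [mul_assoc, ← Finset.prod_mul_distrib]
  congr 2 with s
  ring

theorem inner_hadamard_eq_conj_DiagT_general {n k : ℕ} (T : (Fin k → Fin n) → ℝ)
    (H : Fin k → Matrix (Fin n) (Fin n) ℝ) (U : Matrix (Fin n) (Fin n) ℝ)
    (σ : Equiv.Perm (Fin k)) :
    tinner T (hadP σ (fun s => Uᵀ * H s * U)) = applyT2 (conjT2 U (DiagT σ T)) H := by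
  rw [applyT2_conjT2, applyT2_DiagT]

/-- Theorem 4.4: with `H̃ᵢ = Uᵀ Hᵢ U` for an orthogonal `U`,
`⟨T, H̃_1 ∘_σ ⋯ ∘_σ H̃_k⟩ = (U (Diag^σ T) Uᵀ)[H_1,…,H_k]`. -/
theorem inner_hadamard_eq_conj_DiagT {n k : ℕ} (T : (Fin k → Fin n) → ℝ)
    (H : Fin k → Matrix (Fin n) (Fin n) ℝ) (U : Matrix (Fin n) (Fin n) ℝ)
    (hU : Uᵀ * U = 1) (σ : Equiv.Perm (Fin k)) :
    tinner T (hadP σ (fun s => Uᵀ * H s * U)) = applyT2 (conjT2 U (DiagT σ T)) H :=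
  inner_hadamard_eq_conj_DiagT_general T H U σ
end

section
/- Let ∼ be an equivalence relation on {1,…,n} having at least k equivalence classes, and let σ_1, σ_2, μ be permutations of {1,…,k}. Then the identity ⟨P̃_μ(T), H_1 ∘_{σ_1} ⋯ ∘_{σ_1} H_k⟩ = ⟨P̃_μ(T), H_1 ∘_{σ_2} ⋯ ∘_{σ_2} H_k⟩ holds for all block-constant n×n real matrices H_1,…,H_k and all k-tensors T on ℝⁿ if, and only if, μ ⪯ σ_2^{-1} ∘ σ_1. -/
open Finset

/-- A matrix `H` is block-constant with respect to an equivalence relation `r` on `{1,…,n}`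
if `H^{ij} = H^{i'j'}` whenever `i ∼ i'` and `j ∼ j'`. -/
def BlockConstant {n : ℕ} (r : Setoid (Fin n)) (H : Matrix (Fin n) (Fin n) ℝ) : Prop :=
  ∀ i i' j j' : Fin n, r.r i i' → r.r j j' → H i j = H i' j'

open Classical in
/-- `P̃_μ(T)` keeps the entries `T^{i_1…i_k}` with `i_s ∼ i_{μ(s)}` for all `s`,
and zeroes the rest. -/
noncomputable def PmuR {n k : ℕ} (r : Setoid (Fin n)) (μ : Equiv.Perm (Fin k))
    (T : (Fin k → Fin n) → ℝ) : (Fin k → Fin n) → ℝ :=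
  fun i => if ∀ s, r.r (i s) (i (μ s)) then T i else 0

section Aux

variable {k : ℕ}

lemma aux_pow_orderOf (σ : Equiv.Perm (Fin k)) (s : Fin k) : (σ ^ orderOf σ) s = s := by
  rw [pow_orderOf_eq_one]; rfl

lemma aux_sameCycle_pow (μ : Equiv.Perm (Fin k)) (s : Fin k) (l : ℕ) :
    μ.SameCycle s ((μ ^ l) s) := ⟨(l : ℤ), by rw [zpow_natCast]⟩

lemma refines_iff (μ ν : Equiv.Perm (Fin k)) :
    Refines μ ν ↔ ∀ t, μ.SameCycle t (ν t) := by
  constructor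
  · intro h t
    obtain ⟨r₀, hsub⟩ := h t
    have h1 : ν t ∈ {x | ∃ l : ℕ, 1 ≤ l ∧ x = (ν ^ l) t} := ⟨1, le_refl 1, by simp⟩
    have h2 : t ∈ {x | ∃ l : ℕ, 1 ≤ l ∧ x = (ν ^ l) t} :=
      ⟨orderOf ν, orderOf_pos ν, (aux_pow_orderOf ν t).symm⟩
    obtain ⟨l1, _, he1⟩ := hsub h1
    obtain ⟨l2, _, he2⟩ := hsub h2
    have hc1 : μ.SameCycle r₀ (ν t) := he1 ▸ aux_sameCycle_pow μ r₀ l1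
    have hc2 : μ.SameCycle r₀ t := he2 ▸ aux_sameCycle_pow μ r₀ l2
    exact hc2.symm.trans hc1
  · intro h s
    refine ⟨s, ?_⟩
    rintro x ⟨l, hl, rfl⟩
    have hsc : μ.SameCycle s ((ν ^ l) s) := by
      clear hl
      induction l with
      | zero => simp [Equiv.Perm.SameCycle.refl]
      | succ m ih =>
        have : (ν ^ (m + 1)) s = ν ((ν ^ m) s) := by
          rw [pow_succ']; rfl
        rw [this]
        exact ih.trans (h ((ν ^ m) s))
    obtain ⟨m, hm, _, hme⟩ := hsc.exists_pow_eq''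
    exact ⟨m, hm, hme.symm⟩

/-- the setoid of cycles of a permutation -/
def cycSetoid (μ : Equiv.Perm (Fin k)) : Setoid (Fin k) :=
  ⟨μ.SameCycle, ⟨fun _ => Equiv.Perm.SameCycle.refl μ _, Equiv.Perm.SameCycle.symm,
    Equiv.Perm.SameCycle.trans⟩⟩

noncomputable def cycRep (μ : Equiv.Perm (Fin k)) (t : Fin k) : Fin k :=
  Quotient.out (Quotient.mk (cycSetoid μ) t)

lemma cycRep_eq_iff (μ : Equiv.Perm (Fin k)) {t t' : Fin k} :
    cycRep μ t = cycRep μ t' ↔ μ.SameCycle t t' := by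
  unfold cycRep
  rw [Quotient.out_inj, Quotient.eq]
  rfl

end Aux

/-- Theorem 6.2: for an equivalence relation `∼` on `{1,…,n}` with at least `k`
equivalence classes, the identity
`⟨P̃_μ(T), H_1 ∘_{σ₁} ⋯ ∘_{σ₁} H_k⟩ = ⟨P̃_μ(T), H_1 ∘_{σ₂} ⋯ ∘_{σ₂} H_k⟩`
holds for all block-constant matrices `H_1,…,H_k` and all k-tensors `T`
iff `μ ⪯ σ₂⁻¹ ∘ σ₁`. -/
theorem transfer_block_diagonal {n k : ℕ} (r : Setoid (Fin n))
    (hr : ∃ f : Fin k → Fin n, ∀ a b : Fin k, r.r (f a) (f b) → a = b)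
    (σ₁ σ₂ μ : Equiv.Perm (Fin k)) :
    (∀ (T : (Fin k → Fin n) → ℝ) (H : Fin k → Matrix (Fin n) (Fin n) ℝ),
        (∀ s, BlockConstant r (H s)) →
        tinner (PmuR r μ T) (hadP σ₁ H) = tinner (PmuR r μ T) (hadP σ₂ H)) ↔
      Refines μ (σ₂⁻¹ * σ₁) := by
  classical
  rw [refines_iff]
  constructor
  · -- hard direction, by contraposition
    intro hall
    by_contra hnot
    push_neg at hnot
    obtain ⟨t₀, ht₀⟩ := hnot
    obtain ⟨f, hf⟩ := hr
    set i : Fin k → Fin n := fun t => f (cycRep μ t) with hi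
    have hi_mu : ∀ s, r.r (i s) (i (μ s)) := by
      intro s
      have : cycRep μ s = cycRep μ (μ s) := (cycRep_eq_iff μ).mpr ⟨1, by simp⟩
      simp only [hi, this]
      exact r.iseqv.refl _
    have hi_inj : ∀ a b, r.r (i a) (i b) → μ.SameCycle a b := by
      intro a b h
      exact (cycRep_eq_iff μ).mp (hf _ _ h)
    set T : (Fin k → Fin n) → ℝ := fun j => if j = i then 1 else 0 with hT
    set H : Fin k → Matrix (Fin n) (Fin n) ℝ :=
      fun s => fun _ b => if r.r b (i (σ₁⁻¹ s)) then 1 else 0 with hH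
    have hbc : ∀ s, BlockConstant r (H s) := by
      intro s a a' b b' _ hbb'
      simp only [hH]
      by_cases hb : r.r b (i (σ₁⁻¹ s))
      · rw [if_pos hb, if_pos (r.iseqv.trans (r.iseqv.symm hbb') hb)]
      · rw [if_neg hb, if_neg (fun h => hb (r.iseqv.trans hbb' h))]
    have key := hall T H hbc
    have hsum : ∀ σ : Equiv.Perm (Fin k),
        tinner (PmuR r μ T) (hadP σ H) = hadP σ H i := by
      intro σ
      unfold tinner PmuR
      rw [Finset.sum_eq_single i]
      · rw [if_pos hi_mu, hT]
        simp
      · intro j _ hj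
        by_cases hc : ∀ s, r.r (j s) (j (μ s))
        · rw [if_pos hc, hT]
          simp [hj]
        · rw [if_neg hc, zero_mul]
      · intro h
        exact absurd (Finset.mem_univ i) h
    rw [hsum σ₁, hsum σ₂] at key
    have h1 : hadP σ₁ H i = 1 := by
      unfold hadP
      apply Finset.prod_eq_one
      intro s _
      simp only [hH]
      rw [if_pos (r.iseqv.refl _)]
    have h2 : hadP σ₂ H i = 0 := by
      unfold hadP
      apply Finset.prod_eq_zero (Finset.mem_univ (σ₁ t₀))
      simp only [hH]
      rw [if_neg]
      intro h
      have hsc := hi_inj _ _ h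
      rw [show σ₁⁻¹ (σ₁ t₀) = t₀ from σ₁.symm_apply_apply t₀] at hsc
      exact ht₀ (by simpa [Equiv.Perm.mul_apply] using hsc.symm)
    rw [h1, h2] at key
    exact one_ne_zero key
  · -- easy direction
    intro href T H hbc
    unfold tinner
    apply Finset.sum_congr rfl
    intro j _
    unfold PmuR
    by_cases hc : ∀ s, r.r (j s) (j (μ s))
    · rw [if_pos hc]
      congr 1
      have hpow : ∀ (m : ℕ) (a : Fin k), r.r (j a) (j ((μ ^ m) a)) := by
        intro m
        induction m with
        | zero => intro a; simpa using r.iseqv.refl (j a)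
        | succ p ih =>
          intro a
          have : (μ ^ (p + 1)) a = μ ((μ ^ p) a) := by rw [pow_succ']; rfl
          rw [this]
          exact r.iseqv.trans (ih a) (hc ((μ ^ p) a))
      have horb : ∀ a b, μ.SameCycle a b → r.r (j a) (j b) := by
        intro a b hsc
        obtain ⟨m, _, _, hme⟩ := hsc.exists_pow_eq''
        exact hme ▸ hpow m a
      unfold hadP
      apply Finset.prod_congr rfl
      intro s _
      apply hbc s _ _ _ _ (r.iseqv.refl _)
      apply horb
      have := href (σ₁⁻¹ s)
      simpa [Equiv.Perm.mul_apply, Equiv.Perm.inv_def, Equiv.apply_symm_apply] using this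
    · rw [if_neg hc, zero_mul, zero_mul]
end
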